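/- arXiv:1402.5663 — 2 statements merged into one kernel-verified Lean document; each statement's English description precedes it below -/
import Mathlib

section
/- Let d ≥ 1 be an integer. There exists a constant C > 0 depending only on d such that for every t > 0, every a ∈ L¹(ℝ^d) ∩ L^∞(ℝ^d), and every x ∈ ℝ^d with x ≠ 0, one has |(g_t ⋆ a)(x)| ≤ C·‖x‖^{−d−1}·√t·‖a‖_{L¹(ℝ^d)} + ess sup_{‖y‖ ≥ ‖x‖/2} |a(y)|. -/
open MeasureTheory Real Module
open scoped ENNReal Nat

/-!
Split the convolution integral at the ball `‖y‖ < ‖x‖ / 2`. Inside it `‖x - y‖ ≥ ‖x‖ / 2`, where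
the heat kernel is at most a constant times `‖x‖^{-d-1} √t` because `u^{d+1} e^{-u²/4}` is
bounded; this costs that bound times `‖a‖_{L¹}`. Outside it `|a|` is bounded by its essential
supremum there, and the kernel has total mass one.
-/

theorem enorm_integral_mul_le {α : Type*} [MeasurableSpace α] {μ : Measure α} {K a : α → ℝ}
    {S : Set α} {M : ℝ} (hS : MeasurableSet S) (hK : AEStronglyMeasurable K μ)
    (hK_mass : ∫⁻ y, ‖K y‖ₑ ∂μ ≤ 1) (hK_le : ∀ y ∉ S, ‖K y‖ ≤ M) (ha : Integrable a μ) :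
    ‖∫ y, K y * a y ∂μ‖ₑ ≤
      ENNReal.ofReal (M * ∫ y, |a y| ∂μ) + eLpNorm a ⊤ (μ.restrict S) := by
  set N := eLpNorm a ⊤ (μ.restrict S)
  have h_near : ∫⁻ y in Sᶜ, ‖K y‖ₑ * ‖a y‖ₑ ∂μ ≤ ENNReal.ofReal (M * ∫ y, |a y| ∂μ) := by
    calc ∫⁻ y in Sᶜ, ‖K y‖ₑ * ‖a y‖ₑ ∂μ ≤ ∫⁻ y in Sᶜ, ENNReal.ofReal M * ‖a y‖ₑ ∂μ := by
          refine lintegral_mono_ae (ae_restrict_of_forall_mem hS.compl fun y hy => ?_)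
          rw [← ofReal_norm]
          gcongr
          exact hK_le y hy
      _ ≤ ENNReal.ofReal M * ∫⁻ y, ‖a y‖ₑ ∂μ := by
          rw [lintegral_const_mul' _ _ ENNReal.ofReal_ne_top]
          gcongr
          exact Measure.restrict_le_self
      _ = ENNReal.ofReal (M * ∫ y, |a y| ∂μ) := by
          rw [ENNReal.ofReal_mul' (integral_nonneg fun y => abs_nonneg (a y)),
            ← ofReal_integral_norm_eq_lintegral_enorm ha]
          simp only [Real.norm_eq_abs]
  have h_far : ∫⁻ y in S, ‖K y‖ₑ * ‖a y‖ₑ ∂μ ≤ N := by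
    calc ∫⁻ y in S, ‖K y‖ₑ * ‖a y‖ₑ ∂μ ≤ ∫⁻ y in S, ‖K y‖ₑ * N ∂μ := by
          refine lintegral_mono_ae ?_
          filter_upwards [enorm_ae_le_eLpNormEssSup a (μ.restrict S)] with y hy
          gcongr
          exact hy.trans_eq eLpNorm_exponent_top.symm
      _ = (∫⁻ y in S, ‖K y‖ₑ ∂μ) * N := lintegral_mul_const'' _ hK.enorm.restrict
      _ ≤ N := by
          grw [setLIntegral_le_lintegral, hK_mass, one_mul]
  calc ‖∫ y, K y * a y ∂μ‖ₑ ≤ ∫⁻ y, ‖K y‖ₑ * ‖a y‖ₑ ∂μ := by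
        simpa only [enorm_mul] using enorm_integral_le_lintegral_enorm (fun y => K y * a y)
    _ = ∫⁻ y in Sᶜ, ‖K y‖ₑ * ‖a y‖ₑ ∂μ + ∫⁻ y in S, ‖K y‖ₑ * ‖a y‖ₑ ∂μ := by
        rw [add_comm, lintegral_add_compl _ hS]
    _ ≤ _ := add_le_add h_near h_far

theorem pow_mul_exp_neg_sq_div_four_le (n : ℕ) {u : ℝ} (hu : 0 ≤ u) :
    u ^ n * exp (-(u ^ 2 / 4)) ≤ exp 1 * n ! := by
  have h_gauss : exp (-(u ^ 2 / 4)) ≤ exp 1 * exp (-u) := by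
    rw [← exp_add, exp_le_exp]
    nlinarith [sq_nonneg (u - 2)]
  have h_pow : u ^ n ≤ n ! * exp u := by
    have := pow_div_factorial_le_exp u hu n
    rwa [div_le_iff₀ (by positivity), mul_comm] at this
  calc u ^ n * exp (-(u ^ 2 / 4)) ≤ (n ! * exp u) * (exp 1 * exp (-u)) := by gcongr
    _ = exp 1 * n ! := by rw [exp_neg]; field_simp

noncomputable def heatKernel {E : Type*} [Norm E] (d : ℕ) (t : ℝ) (z : E) : ℝ :=
  (4 * π * t) ^ (-(d : ℝ) / 2) * exp (-‖z‖ ^ 2 / (4 * t))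

noncomputable def heatKernelDecayConst (d : ℕ) : ℝ := (4 * π) ^ (-(d : ℝ) / 2) * exp 1 * (d + 1)!

theorem heatKernelDecayConst_pos (d : ℕ) : 0 < heatKernelDecayConst d := by
  unfold heatKernelDecayConst
  positivity

section HeatKernel

variable {E : Type*} [NormedAddCommGroup E]

theorem heatKernel_nonneg (d : ℕ) {t : ℝ} (ht : 0 < t) (z : E) : 0 ≤ heatKernel d t z := by
  unfold heatKernel
  positivity

theorem continuous_heatKernel (d : ℕ) (t : ℝ) : Continuous (heatKernel (E := E) d t) := by
  unfold heatKernel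
  fun_prop

theorem integral_heatKernel [InnerProductSpace ℝ E] [FiniteDimensional ℝ E] [MeasurableSpace E]
    [BorelSpace E] {d : ℕ} (hd : finrank ℝ E = d) {t : ℝ} (ht : 0 < t) :
    ∫ z : E, heatKernel d t z = 1 := by
  have h_exp (z : E) : exp (-‖z‖ ^ 2 / (4 * t)) = exp (-(1 / (4 * t)) * ‖z‖ ^ 2) := by
    congr 1
    ring
  simp only [heatKernel, h_exp, integral_const_mul,
    GaussianFourier.integral_rexp_neg_mul_sq_norm (by positivity : (0 : ℝ) < 1 / (4 * t)), hd]
  rw [show π / (1 / (4 * t)) = 4 * π * t by field_simp, ← rpow_add (by positivity), neg_div,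
    neg_add_cancel, rpow_zero]

theorem lintegral_enorm_heatKernel [InnerProductSpace ℝ E] [FiniteDimensional ℝ E]
    [MeasurableSpace E] [BorelSpace E] {d : ℕ} (hd : finrank ℝ E = d) {t : ℝ} (ht : 0 < t) :
    ∫⁻ z : E, ‖heatKernel d t z‖ₑ = 1 := by
  have h_int := integral_heatKernel hd ht
  have h_intble : Integrable (heatKernel (E := E) d t) :=
    Integrable.of_integral_ne_zero (by simp [h_int])
  simp_rw [Real.enorm_eq_ofReal (heatKernel_nonneg d ht _)]
  rw [← ofReal_integral_eq_lintegral_ofReal h_intble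
    (Filter.Eventually.of_forall (heatKernel_nonneg d ht)), h_int, ENNReal.ofReal_one]

theorem heatKernel_le (d : ℕ) {t : ℝ} (ht : 0 < t) {z : E} (hz : z ≠ 0) :
    heatKernel d t z ≤ heatKernelDecayConst d * ‖z‖ ^ (-(d : ℝ) - 1) * √t := by
  set σ := √t
  set r := ‖z‖
  have hσ : 0 < σ := sqrt_pos.2 ht
  have hr : 0 < r := norm_pos_iff.2 hz
  have ht_eq : t = σ ^ 2 := (sq_sqrt ht.le).symm
  have h_coeff : (4 * π * t) ^ (-(d : ℝ) / 2) = (4 * π) ^ (-(d : ℝ) / 2) * (σ ^ d)⁻¹ := by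
    rw [mul_rpow (by positivity) ht.le, ht_eq, ← rpow_natCast_mul hσ.le, ← rpow_natCast,
      ← rpow_neg hσ.le]
    congr 2
    ring
  have h_exp : -r ^ 2 / (4 * t) = -((r / σ) ^ 2 / 4) := by
    rw [ht_eq]
    field_simp
  have h_rpow : r ^ (-(d : ℝ) - 1) = (r ^ (d + 1))⁻¹ := by
    rw [← rpow_natCast, ← rpow_neg hr.le]
    push_cast
    ring_nf
  have h_bound := pow_mul_exp_neg_sq_div_four_le (d + 1) (div_pos hr hσ).le
  rw [div_pow, div_mul_eq_mul_div, div_le_iff₀ (by positivity)] at h_bound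
  rw [heatKernel, heatKernelDecayConst, h_coeff, h_exp, h_rpow]
  calc (4 * π) ^ (-(d : ℝ) / 2) * (σ ^ d)⁻¹ * exp (-((r / σ) ^ 2 / 4))
      = (4 * π) ^ (-(d : ℝ) / 2) * (r ^ (d + 1))⁻¹ * σ *
          (r ^ (d + 1) * exp (-((r / σ) ^ 2 / 4)) / σ ^ (d + 1)) := by
        field_simp
        ring
    _ ≤ (4 * π) ^ (-(d : ℝ) / 2) * (r ^ (d + 1))⁻¹ * σ * (exp 1 * (d + 1)!) := by
        gcongr
        rwa [div_le_iff₀ (by positivity)]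
    _ = _ := by ring

theorem heatKernel_sub_le (d : ℕ) {t : ℝ} (ht : 0 < t) {x y : E} (hy : ‖y‖ < ‖x‖ / 2) :
    heatKernel d t (x - y) ≤
      heatKernelDecayConst d / 2 ^ (-(d : ℝ) - 1) * ‖x‖ ^ (-(d : ℝ) - 1) * √t := by
  have hx : 0 < ‖x‖ / 2 := (norm_nonneg y).trans_lt hy
  have hxy : ‖x‖ / 2 ≤ ‖x - y‖ := by linarith [norm_sub_norm_le x y]
  calc heatKernel d t (x - y) ≤ heatKernelDecayConst d * ‖x - y‖ ^ (-(d : ℝ) - 1) * √t :=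
        heatKernel_le d ht (norm_pos_iff.1 (hx.trans_le hxy))
    _ ≤ heatKernelDecayConst d * (‖x‖ / 2) ^ (-(d : ℝ) - 1) * √t := by
        have hC := heatKernelDecayConst_pos d
        gcongr heatKernelDecayConst d * ?_ * √t
        exact rpow_le_rpow_of_nonpos hx hxy (by linarith [d.cast_nonneg (α := ℝ)])
    _ = _ := by rw [div_rpow (norm_nonneg x) zero_le_two]; ring

end HeatKernel

theorem stmt8_general (d : ℕ) :
    ∃ C > (0 : ℝ), ∀ t : ℝ, 0 < t →
      ∀ a : EuclideanSpace ℝ (Fin d) → ℝ, Integrable a → MemLp a ⊤ volume →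
      ∀ x : EuclideanSpace ℝ (Fin d), x ≠ 0 →
        ENNReal.ofReal
            |∫ y, (4 * Real.pi * t) ^ (-(d : ℝ) / 2) * Real.exp (-‖x - y‖ ^ 2 / (4 * t)) * a y| ≤
          ENNReal.ofReal (C * ‖x‖ ^ (-(d : ℝ) - 1) * Real.sqrt t * ∫ y, |a y|) +
            eLpNorm a ⊤ (volume.restrict {y : EuclideanSpace ℝ (Fin d) | ‖x‖ / 2 ≤ ‖y‖}) := by
  refine ⟨heatKernelDecayConst d / 2 ^ (-(d : ℝ) - 1),
    div_pos (heatKernelDecayConst_pos d) (by positivity),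
    fun t ht a ha _ x _ => ?_⟩
  have h_mass : ∫⁻ y, ‖heatKernel d t (x - y)‖ₑ = 1 := by
    rw [lintegral_sub_left_eq_self (fun z => ‖heatKernel d t z‖ₑ) x]
    exact lintegral_enorm_heatKernel finrank_euclideanSpace_fin ht
  have h_near (y : EuclideanSpace ℝ (Fin d)) (hy : y ∉ {y | ‖x‖ / 2 ≤ ‖y‖}) :
      ‖heatKernel d t (x - y)‖ ≤
        heatKernelDecayConst d / 2 ^ (-(d : ℝ) - 1) * ‖x‖ ^ (-(d : ℝ) - 1) * √t := by
    rw [norm_of_nonneg (heatKernel_nonneg d ht _)]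
    exact heatKernel_sub_le d ht (not_le.1 hy)
  rw [← Real.enorm_eq_ofReal_abs]
  change ‖∫ y, heatKernel d t (x - y) * a y‖ₑ ≤ _
  exact enorm_integral_mul_le (measurableSet_le measurable_const measurable_norm)
    ((continuous_heatKernel d t).comp (continuous_sub_left x)).aestronglyMeasurable
    h_mass.le h_near ha

/-- There is `C > 0` depending only on `d` such that for every `t > 0`,
every `a ∈ L¹ ∩ L^∞` and every `x ≠ 0`,
`|(g_t ⋆ a)(x)| ≤ C ‖x‖^{−d−1} √t ‖a‖_{L¹} + ess sup_{‖y‖ ≥ ‖x‖/2} |a(y)|`,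
where `g_t(x) = (4πt)^{−d/2} exp(−‖x‖²/(4t))` and the essential supremum is the
`L^∞` norm of `a` on the set `{‖y‖ ≥ ‖x‖/2}` (stated in `ℝ≥0∞`). -/
theorem stmt8 (d : ℕ) (hd : 1 ≤ d) :
    ∃ C > (0 : ℝ), ∀ t : ℝ, 0 < t →
      ∀ a : EuclideanSpace ℝ (Fin d) → ℝ, Integrable a → MemLp a ⊤ volume →
      ∀ x : EuclideanSpace ℝ (Fin d), x ≠ 0 →
        ENNReal.ofReal
            |∫ y, (4 * Real.pi * t) ^ (-(d : ℝ) / 2) * Real.exp (-‖x - y‖ ^ 2 / (4 * t)) * a y| ≤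
          ENNReal.ofReal (C * ‖x‖ ^ (-(d : ℝ) - 1) * Real.sqrt t * ∫ y, |a y|) +
            eLpNorm a ⊤ (volume.restrict {y : EuclideanSpace ℝ (Fin d) | ‖x‖ / 2 ≤ ‖y‖}) :=
  stmt8_general d
end

section
/- Let d ≥ 1 be an integer and let u : ℝ^d × (0,∞) → ℝ^d be measurable. Assume: (i) there is M > 0 with |u(x,t)| ≤ M·min((1+‖x‖)^{−d}, (1+t)^{−d/2}) for all t > 0 and a.e. x; (ii) there are c₀ > 0 and M₀ > 0 such that for all t > M₀ and a.e. x with ‖x‖ ≥ M₀·√t one has |u(x,t)| ≥ c₀·‖x‖^{−d}. Then for every α ≥ 0 and every p with 1 < p < ∞ and α + d/p < d, there exist constants c, c' > 0 and t₀ > 0 such that for all t > t₀, c·t^{−(1/2)(d−α−d/p)} ≤ ‖(1+‖x‖)^α·u(·,t)‖_{L^p(ℝ^d)} ≤ c'·t^{−(1/2)(d−α−d/p)}. -/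
/-!
Upper bound: by (i), `(1 + ‖x‖)^α |u(x,t)| ≲ (√t + ‖x‖)^(α-d)`, and dilating by `√t` shows that the
`L^p` norm of `(√t + ‖x‖)^(α-d)` is `t^((α-d+d/p)/2)` times that of `(1 + ‖x‖)^(α-d)`, which is
finite exactly because `(d - α) p > d`. Lower bound: on the annulus `M₀√t ≤ ‖x‖ ≤ 2M₀√t`, (ii) gives
`(1 + ‖x‖)^α |u(x,t)| ≳ t^((α-d)/2)`, and the annulus has volume `≍ t^(d/2)`.
-/

open MeasureTheory Metric Module
open scoped ENNReal

namespace Real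

lemma one_add_rpow_mul_min_le {n α t r : ℝ} (hα : 0 ≤ α) (hαn : α ≤ n) (ht : 0 < t)
    (hr : 0 ≤ r) :
    (1 + r) ^ α * min ((1 + r) ^ (-n)) ((1 + t) ^ (-n / 2)) ≤
      2 ^ (n - α) * (√t + r) ^ (α - n) := by
  set m := max (1 + r) √t
  have hm : 0 < m := lt_max_of_lt_left (by linarith)
  have hmin : min ((1 + r) ^ (-n)) ((1 + t) ^ (-n / 2)) ≤ m ^ (-n) := by
    rcases le_total (1 + r) √t with h | h
    · rw [show m = √t from max_eq_right h]
      refine (min_le_right _ _).trans ?_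
      rw [← rpow_div_two_eq_sqrt _ ht.le]
      exact rpow_le_rpow_of_nonpos ht (by linarith) (by linarith)
    · rw [show m = 1 + r from max_eq_left h]
      exact min_le_left _ _
  calc (1 + r) ^ α * min ((1 + r) ^ (-n)) ((1 + t) ^ (-n / 2))
      ≤ m ^ α * m ^ (-n) := by
        gcongr
        exact le_max_left _ _
    _ = m ^ (α - n) := by rw [← rpow_add hm, ← sub_eq_add_neg]
    _ ≤ ((√t + r) / 2) ^ (α - n) := by
        refine rpow_le_rpow_of_nonpos (by positivity) ?_ (by linarith)
        have := le_max_left (1 + r) √t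
        have := le_max_right (1 + r) √t
        linarith
    _ = 2 ^ (n - α) * (√t + r) ^ (α - n) := by
        rw [div_rpow (by positivity) zero_le_two, div_eq_mul_inv, ← rpow_neg zero_le_two,
          neg_sub, mul_comm]

lemma rpow_sub_le_one_add_rpow_mul_rpow_neg {n α R r c : ℝ} (hα : 0 ≤ α) (hαn : α ≤ n)
    (hc : 0 ≤ c) (hR : 0 < R) (hRr : R ≤ r) (hr2R : r ≤ 2 * R) :
    c * (2 * R) ^ (α - n) ≤ (1 + r) ^ α * (c * r ^ (-n)) := by
  have hr : 0 < r := hR.trans_le hRr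
  calc c * (2 * R) ^ (α - n) ≤ c * r ^ (α - n) := by
        gcongr c * ?_
        exact rpow_le_rpow_of_nonpos hr hr2R (by linarith)
    _ = r ^ α * (c * r ^ (-n)) := by
        rw [sub_eq_add_neg, rpow_add hr]
        ring
    _ ≤ (1 + r) ^ α * (c * r ^ (-n)) := by
        gcongr
        linarith

end Real

lemma ofReal_mul_measure_rpow_le_eLpNorm {X F : Type*} [MeasurableSpace X] [NormedAddCommGroup F]
    {μ : Measure X} {p : ℝ≥0∞} (hp0 : p ≠ 0) (hp : p ≠ ∞) {f : X → F} {A : Set X}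
    (hA : MeasurableSet A) {m : ℝ} (hm : 0 ≤ m) (hf : ∀ᵐ x ∂μ, x ∈ A → m ≤ ‖f x‖) :
    ENNReal.ofReal m * μ A ^ (1 / p.toReal) ≤ eLpNorm f p μ := by
  rw [← Real.enorm_of_nonneg hm, ← eLpNorm_indicator_const hA hp0 hp]
  refine eLpNorm_mono_ae (hf.mono fun x hx => ?_)
  by_cases hxA : x ∈ A
  · rw [Set.indicator_of_mem hxA, Real.norm_of_nonneg hm]
    exact hx hxA
  · rw [Set.indicator_of_notMem hxA, norm_zero]
    exact norm_nonneg _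

lemma eLpNorm_one_add_norm_rpow_ne_zero {E : Type*} [NormedAddCommGroup E] [MeasurableSpace E]
    [BorelSpace E] {μ : Measure E} [NeZero μ] (γ : ℝ) {p : ℝ≥0∞} (hp0 : p ≠ 0) :
    eLpNorm (fun x : E => (1 + ‖x‖) ^ γ) p μ ≠ 0 := by
  have hmeas : AEStronglyMeasurable (fun x : E => (1 + ‖x‖) ^ γ) μ :=
    (by fun_prop : Measurable fun x : E => (1 + ‖x‖) ^ γ).aestronglyMeasurable
  rw [Ne, eLpNorm_eq_zero_iff hmeas hp0]
  intro h
  obtain ⟨x, hx⟩ := h.exists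
  exact (Real.rpow_pos_of_pos (by positivity) γ).ne' hx

section HaarMeasure

variable {E F : Type*} [NormedAddCommGroup E] [NormedSpace ℝ E] [FiniteDimensional ℝ E]
  [MeasurableSpace E] [BorelSpace E] [NormedAddCommGroup F]
  (μ : Measure E) [μ.IsAddHaarMeasure] {p : ℝ≥0∞}

lemma eLpNorm_comp_inv_smul {g : E → F} (hg : AEStronglyMeasurable g μ) {s : ℝ} (hs : 0 < s)
    (hp : p ≠ ∞) :
    eLpNorm (fun x => g (s⁻¹ • x)) p μ =
      ENNReal.ofReal (s ^ (finrank ℝ E / p.toReal)) * eLpNorm g p μ := by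
  have hmap : Measure.map (s⁻¹ • ·) μ = ENNReal.ofReal (s ^ finrank ℝ E) • μ := by
    rw [Measure.map_addHaar_smul μ (inv_ne_zero hs.ne'), inv_pow, inv_inv,
      abs_of_pos (by positivity)]
  have hg' : AEStronglyMeasurable g (Measure.map (s⁻¹ • ·) μ) := by
    rw [hmap]
    exact hg.smul_measure _
  rw [← Function.comp_def, ← eLpNorm_map_measure hg' (measurable_const_smul _).aemeasurable, hmap,
    eLpNorm_smul_measure_of_ne_top hp, smul_eq_mul, ENNReal.ofReal_rpow_of_nonneg (by positivity)
      (by positivity), ← Real.rpow_natCast, ← Real.rpow_mul hs.le, one_div, ENNReal.toReal_inv,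
      ← div_eq_mul_inv]

lemma eLpNorm_add_norm_rpow {s : ℝ} (hs : 0 < s) (γ : ℝ) (hp : p ≠ ∞) :
    eLpNorm (fun x : E => (s + ‖x‖) ^ γ) p μ =
      ENNReal.ofReal (s ^ (γ + finrank ℝ E / p.toReal)) *
        eLpNorm (fun x : E => (1 + ‖x‖) ^ γ) p μ := by
  have hfactor : (fun x : E => (s + ‖x‖) ^ γ) = s ^ γ • fun x => (1 + ‖s⁻¹ • x‖) ^ γ := by
    ext x
    rw [Pi.smul_apply, norm_smul, Real.norm_of_nonneg (inv_nonneg.2 hs.le), smul_eq_mul,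
      ← Real.mul_rpow hs.le (by positivity), mul_add, mul_one, ← mul_assoc, mul_inv_cancel₀ hs.ne',
      one_mul]
  have hmeas : AEStronglyMeasurable (fun x : E => (1 + ‖x‖) ^ γ) μ :=
    (by fun_prop : Measurable fun x : E => (1 + ‖x‖) ^ γ).aestronglyMeasurable
  rw [hfactor, eLpNorm_const_smul, eLpNorm_comp_inv_smul μ hmeas hs hp,
    Real.enorm_of_nonneg (by positivity), ← mul_assoc, ← ENNReal.ofReal_mul (by positivity),
    Real.rpow_add hs]

lemma eLpNorm_one_add_norm_rpow_lt_top {γ : ℝ} (hp0 : p ≠ 0) (hp : p ≠ ∞)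
    (hγ : (finrank ℝ E : ℝ) < -γ * p.toReal) :
    eLpNorm (fun x : E => (1 + ‖x‖) ^ γ) p μ < ∞ := by
  have hmeas : AEStronglyMeasurable (fun x : E => (1 + ‖x‖) ^ γ) μ :=
    (by fun_prop : Measurable fun x : E => (1 + ‖x‖) ^ γ).aestronglyMeasurable
  refine ((integrable_norm_rpow_iff hmeas hp0 hp).1 ?_).eLpNorm_lt_top
  refine (integrable_one_add_norm hγ).congr (Filter.Eventually.of_forall fun x => ?_)
  dsimp only
  rw [Real.norm_of_nonneg (by positivity), ← Real.rpow_mul (by positivity), neg_mul, neg_neg]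

lemma measure_closedBall_two_mul_diff_ball [Nontrivial E] {R : ℝ} (hR : 0 ≤ R) :
    μ (closedBall 0 (2 * R) \ ball 0 R) =
      ENNReal.ofReal ((2 ^ finrank ℝ E - 1) * R ^ finrank ℝ E) * μ (ball 0 1) := by
  have hsub : ball (0 : E) R ⊆ closedBall 0 (2 * R) :=
    ball_subset_closedBall.trans (closedBall_subset_closedBall (by linarith))
  rw [measure_sdiff hsub measurableSet_ball.nullMeasurableSet measure_ball_lt_top.ne,
    μ.addHaar_closedBall _ (by positivity), μ.addHaar_ball _ hR,
    ← ENNReal.sub_mul fun _ _ => measure_ball_lt_top.ne,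
    ← ENNReal.ofReal_sub _ (by positivity), mul_pow, ← sub_one_mul]

end HaarMeasure

section Decay

variable {E F : Type*} [NormedAddCommGroup E] [NormedSpace ℝ E] [FiniteDimensional ℝ E]
  [MeasurableSpace E] [BorelSpace E] [NormedAddCommGroup F] [NormedSpace ℝ F]
  (μ : Measure E) [μ.IsAddHaarMeasure] {n : ℕ} {u : E → ℝ → F} {α p : ℝ}

theorem exists_eLpNorm_one_add_norm_rpow_smul_le (hn : finrank ℝ E = n) {M : ℝ} (hM : 0 < M)
    (hupper : ∀ t : ℝ, 0 < t → ∀ᵐ x ∂μ,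
      ‖u x t‖ ≤ M * min ((1 + ‖x‖) ^ (-(n : ℝ))) ((1 + t) ^ (-(n : ℝ) / 2)))
    (hα : 0 ≤ α) (hp : 0 < p) (hαp : α + n / p < n) :
    ∃ c' > (0 : ℝ), ∀ t : ℝ, 0 < t →
      eLpNorm (fun x => (1 + ‖x‖) ^ α • u x t) (ENNReal.ofReal p) μ ≤
        ENNReal.ofReal (c' * t ^ (-(1 / 2 : ℝ) * ((n : ℝ) - α - n / p))) := by
  have hαn : α ≤ n := by linarith [div_nonneg n.cast_nonneg hp.le]
  have hp0 : ENNReal.ofReal p ≠ 0 := ENNReal.ofReal_ne_zero_iff.2 hp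
  set J := eLpNorm (fun x : E => (1 + ‖x‖) ^ (α - n)) (ENNReal.ofReal p) μ
  have hJ : J ≠ ∞ := by
    refine (eLpNorm_one_add_norm_rpow_lt_top μ hp0 ENNReal.ofReal_ne_top ?_).ne
    rw [hn, ENNReal.toReal_ofReal hp.le, neg_sub, ← div_lt_iff₀ hp]
    linarith
  have hJpos : 0 < J.toReal :=
    ENNReal.toReal_pos (eLpNorm_one_add_norm_rpow_ne_zero _ hp0) hJ
  set K := M * 2 ^ ((n : ℝ) - α)
  refine ⟨K * J.toReal, by positivity, fun t ht => ?_⟩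
  have hpoint : ∀ᵐ x ∂μ, ‖(1 + ‖x‖) ^ α • u x t‖ ≤
      ‖(K • fun x : E => (√t + ‖x‖) ^ (α - n)) x‖ := by
    filter_upwards [hupper t ht] with x hx
    rw [Pi.smul_apply, norm_smul, norm_smul, Real.norm_of_nonneg (by positivity),
      Real.norm_of_nonneg (by positivity), Real.norm_of_nonneg (by positivity)]
    calc (1 + ‖x‖) ^ α * ‖u x t‖
        ≤ (1 + ‖x‖) ^ α * (M * min ((1 + ‖x‖) ^ (-(n : ℝ))) ((1 + t) ^ (-(n : ℝ) / 2))) := by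
          gcongr
      _ = M * ((1 + ‖x‖) ^ α * min ((1 + ‖x‖) ^ (-(n : ℝ))) ((1 + t) ^ (-(n : ℝ) / 2))) := by
          ring
      _ ≤ M * (2 ^ ((n : ℝ) - α) * (√t + ‖x‖) ^ (α - n)) := by
          gcongr M * ?_
          exact Real.one_add_rpow_mul_min_le hα hαn ht (norm_nonneg x)
      _ = K * (√t + ‖x‖) ^ (α - n) := by ring
  calc eLpNorm (fun x => (1 + ‖x‖) ^ α • u x t) (ENNReal.ofReal p) μ
      ≤ eLpNorm (K • fun x : E => (√t + ‖x‖) ^ (α - n)) (ENNReal.ofReal p) μ :=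
        eLpNorm_mono_ae hpoint
    _ = ENNReal.ofReal K * (ENNReal.ofReal (√t ^ (α - n + n / p)) * ENNReal.ofReal J.toReal) := by
        rw [eLpNorm_const_smul, eLpNorm_add_norm_rpow μ (by positivity) _ ENNReal.ofReal_ne_top,
          Real.enorm_of_nonneg (by positivity), hn, ENNReal.toReal_ofReal hp.le,
          ENNReal.ofReal_toReal hJ]
    _ = ENNReal.ofReal (K * J.toReal * t ^ (-(1 / 2 : ℝ) * ((n : ℝ) - α - n / p))) := by
        rw [← ENNReal.ofReal_mul (by positivity), ← ENNReal.ofReal_mul (by positivity),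
          ← Real.rpow_div_two_eq_sqrt _ ht.le]
        ring_nf

theorem exists_le_eLpNorm_one_add_norm_rpow_smul [Nontrivial E] (hn : finrank ℝ E = n)
    {c₀ M₀ : ℝ} (hc₀ : 0 < c₀) (hM₀ : 0 < M₀)
    (hlower : ∀ t : ℝ, M₀ < t → ∀ᵐ x ∂μ,
      M₀ * √t ≤ ‖x‖ → c₀ * ‖x‖ ^ (-(n : ℝ)) ≤ ‖u x t‖)
    (hα : 0 ≤ α) (hαn : α ≤ n) (hp : 0 < p) :
    ∃ c > (0 : ℝ), ∀ t : ℝ, M₀ < t →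
      ENNReal.ofReal (c * t ^ (-(1 / 2 : ℝ) * ((n : ℝ) - α - n / p))) ≤
        eLpNorm (fun x => (1 + ‖x‖) ^ α • u x t) (ENNReal.ofReal p) μ := by
  have hp0 : ENNReal.ofReal p ≠ 0 := ENNReal.ofReal_ne_zero_iff.2 hp
  have hball : μ (ball 0 1) ≠ ∞ := measure_ball_lt_top.ne
  set v := (μ (ball (0 : E) 1)).toReal
  have hv : 0 < v := ENNReal.toReal_pos (measure_ball_pos μ 0 one_pos).ne' hball
  have h2n : (0 : ℝ) < 2 ^ n - 1 := by
    have : 0 < n := hn ▸ finrank_pos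
    linarith [one_lt_pow₀ (one_lt_two : (1 : ℝ) < 2) this.ne']
  refine ⟨c₀ * (2 * M₀) ^ (α - n) * ((2 ^ n - 1) * M₀ ^ n * v) ^ (1 / p), by positivity,
    fun t ht => ?_⟩
  have ht0 : 0 < t := hM₀.trans ht
  set R := M₀ * √t
  have hR : 0 < R := by positivity
  have hpoint : ∀ᵐ x ∂μ, x ∈ closedBall 0 (2 * R) \ ball 0 R →
      c₀ * (2 * R) ^ (α - n) ≤ ‖(1 + ‖x‖) ^ α • u x t‖ := by
    filter_upwards [hlower t ht] with x hx hxA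
    have hRx : R ≤ ‖x‖ := by simpa using hxA.2
    have hx2R : ‖x‖ ≤ 2 * R := by simpa using hxA.1
    rw [norm_smul, Real.norm_of_nonneg (by positivity)]
    exact (Real.rpow_sub_le_one_add_rpow_mul_rpow_neg hα hαn hc₀.le hR hRx hx2R).trans
      (by gcongr; exact hx hRx)
  calc ENNReal.ofReal
        (c₀ * (2 * M₀) ^ (α - n) * ((2 ^ n - 1) * M₀ ^ n * v) ^ (1 / p) *
          t ^ (-(1 / 2 : ℝ) * ((n : ℝ) - α - n / p)))
      = ENNReal.ofReal (c₀ * (2 * R) ^ (α - n)) *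
          μ (closedBall 0 (2 * R) \ ball 0 R) ^ (1 / (ENNReal.ofReal p).toReal) := by
        rw [measure_closedBall_two_mul_diff_ball μ hR.le, hn, ← ENNReal.ofReal_toReal hball,
          ← ENNReal.ofReal_mul (by positivity), ENNReal.toReal_ofReal hp.le,
          ENNReal.ofReal_rpow_of_nonneg (by positivity) (by positivity),
          ← ENNReal.ofReal_mul (by positivity)]
        congr 1
        have hs : 0 ≤ √t := Real.sqrt_nonneg t
        rw [show 2 * R = 2 * M₀ * √t by ring,
          show (2 ^ n - 1) * R ^ n * v = (2 ^ n - 1) * M₀ ^ n * v * √t ^ n by ring,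
          Real.mul_rpow (x := 2 * M₀) (by positivity) hs,
          Real.mul_rpow (y := √t ^ n) (by positivity) (by positivity),
          ← Real.rpow_natCast √t n, ← Real.rpow_mul hs, ← Real.rpow_div_two_eq_sqrt _ ht0.le,
          ← Real.rpow_div_two_eq_sqrt _ ht0.le,
          show -(1 / 2 : ℝ) * (n - α - n / p) = (α - n) / 2 + n * (1 / p) / 2 by ring,
          Real.rpow_add ht0]
        ring
    _ ≤ eLpNorm (fun x => (1 + ‖x‖) ^ α • u x t) (ENNReal.ofReal p) μ :=
        ofReal_mul_measure_rpow_le_eLpNorm hp0 ENNReal.ofReal_ne_top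
          (measurableSet_closedBall.diff measurableSet_ball) (by positivity) hpoint

end Decay

theorem stmt18_general (d : ℕ) (hd : 1 ≤ d)
    (u : EuclideanSpace ℝ (Fin d) → ℝ → EuclideanSpace ℝ (Fin d))
    (M : ℝ) (hM : 0 < M)
    (hupper : ∀ t : ℝ, 0 < t → ∀ᵐ x : EuclideanSpace ℝ (Fin d) ∂volume,
      ‖u x t‖ ≤ M * min ((1 + ‖x‖) ^ (-(d : ℝ))) ((1 + t) ^ (-(d : ℝ) / 2)))
    (c₀ M₀ : ℝ) (hc₀ : 0 < c₀) (hM₀ : 0 < M₀)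
    (hlower : ∀ t : ℝ, M₀ < t → ∀ᵐ x : EuclideanSpace ℝ (Fin d) ∂volume,
      M₀ * Real.sqrt t ≤ ‖x‖ → c₀ * ‖x‖ ^ (-(d : ℝ)) ≤ ‖u x t‖) :
    ∀ α : ℝ, 0 ≤ α → ∀ p : ℝ, 1 < p → α + d / p < d →
      ∃ c > (0 : ℝ), ∃ c' > (0 : ℝ), ∃ t₀ > (0 : ℝ), ∀ t : ℝ, t₀ < t →
        ENNReal.ofReal (c * t ^ (-(1 / 2 : ℝ) * ((d : ℝ) - α - d / p))) ≤
          eLpNorm (fun x => (1 + ‖x‖) ^ α • u x t) (ENNReal.ofReal p) volume ∧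
        eLpNorm (fun x => (1 + ‖x‖) ^ α • u x t) (ENNReal.ofReal p) volume ≤
          ENNReal.ofReal (c' * t ^ (-(1 / 2 : ℝ) * ((d : ℝ) - α - d / p))) := by
  intro α hα p hp hαp
  have : Nonempty (Fin d) := ⟨⟨0, hd⟩⟩
  have hp0 : 0 < p := one_pos.trans hp
  have hαd : α ≤ d := by linarith [div_nonneg d.cast_nonneg hp0.le]
  obtain ⟨c, hc, hlow⟩ := exists_le_eLpNorm_one_add_norm_rpow_smul volume
    finrank_euclideanSpace_fin hc₀ hM₀ hlower hα hαd hp0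
  obtain ⟨c', hc', hup⟩ := exists_eLpNorm_one_add_norm_rpow_smul_le volume
    finrank_euclideanSpace_fin hM hupper hα hp0 hαp
  exact ⟨c, hc, c', hc', M₀, hM₀, fun t ht => ⟨hlow t ht, hup t (hM₀.trans ht)⟩⟩

/-- Suppose (i) `|u(x,t)| ≤ M min((1+‖x‖)^{−d}, (1+t)^{−d/2})` for
all `t > 0` and a.e. `x`, and (ii) `|u(x,t)| ≥ c₀ ‖x‖^{−d}` for all `t > M₀` and
a.e. `x` with `‖x‖ ≥ M₀ √t`. Then for every `α ≥ 0` and `1 < p < ∞` with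
`α + d/p < d`, there are `c, c' > 0` and `t₀ > 0` with
`c t^{−(1/2)(d−α−d/p)} ≤ ‖(1+‖x‖)^α u(·,t)‖_{L^p} ≤ c' t^{−(1/2)(d−α−d/p)}`
for all `t > t₀`. -/
theorem stmt18 (d : ℕ) (hd : 1 ≤ d)
    (u : EuclideanSpace ℝ (Fin d) → ℝ → EuclideanSpace ℝ (Fin d))
    (humeas : Measurable (Function.uncurry u))
    (M : ℝ) (hM : 0 < M)
    (hupper : ∀ t : ℝ, 0 < t → ∀ᵐ x : EuclideanSpace ℝ (Fin d) ∂volume,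
      ‖u x t‖ ≤ M * min ((1 + ‖x‖) ^ (-(d : ℝ))) ((1 + t) ^ (-(d : ℝ) / 2)))
    (c₀ M₀ : ℝ) (hc₀ : 0 < c₀) (hM₀ : 0 < M₀)
    (hlower : ∀ t : ℝ, M₀ < t → ∀ᵐ x : EuclideanSpace ℝ (Fin d) ∂volume,
      M₀ * Real.sqrt t ≤ ‖x‖ → c₀ * ‖x‖ ^ (-(d : ℝ)) ≤ ‖u x t‖) :
    ∀ α : ℝ, 0 ≤ α → ∀ p : ℝ, 1 < p → α + d / p < d →
      ∃ c > (0 : ℝ), ∃ c' > (0 : ℝ), ∃ t₀ > (0 : ℝ), ∀ t : ℝ, t₀ < t →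
        ENNReal.ofReal (c * t ^ (-(1 / 2 : ℝ) * ((d : ℝ) - α - d / p))) ≤
          eLpNorm (fun x => (1 + ‖x‖) ^ α • u x t) (ENNReal.ofReal p) volume ∧
        eLpNorm (fun x => (1 + ‖x‖) ^ α • u x t) (ENNReal.ofReal p) volume ≤
          ENNReal.ofReal (c' * t ^ (-(1 / 2 : ℝ) * ((d : ℝ) - α - d / p))) :=
  stmt18_general d hd u M hM hupper c₀ M₀ hc₀ hM₀ hlower
end
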